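/- Local optimality of the sequential mechanism: let Y be the output of any mechanism for which Y_i ∈ {X_i, ∗} almost surely (faithfulness) and Y_i is conditionally independent of X_K given Y_{[i−1]} (local privacy). Then for every history y_{[i−1]} occurring with positive probability, P(Y_i = ∗ | Y_{[i−1]} = y_{[i−1]}) ≥ 1 − ∑_{a∈𝒳} min_{u} P(X_i = a | X_K = u, Y_{[i−1]} = y_{[i−1]}), where the minimum is over u ∈ 𝒳^{|K|} with P(X_K = u, Y_{[i−1]} = y_{[i−1]}) > 0. Moreover, the sequential privacy mechanism attains this lower bound with equality, and hence minimizes the conditional erasure probability at step i among all such mechanisms. -/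

import Mathlib

open Finset
open scoped Classical

noncomputable section

namespace GenotypeHiding

variable {X : Type} [Fintype X] [DecidableEq X]

/-- Restriction of a sequence `x` to the sensitive positions `K`. -/
def restr {n : ℕ} (K : Finset (Fin n)) (x : Fin n → X) : ↥K → X := fun i => x (i : Fin n)

/-- `y` agrees with the history `h` on all coordinates `j` with `j < t`
(i.e. the event `Y_{[t]} = h_{[t]}`, zero-based). -/
def agreeN {n : ℕ} (t : ℕ) (y h : Fin n → Option X) : Prop :=
  ∀ j : Fin n, (j : ℕ) < t → y j = h j

/-- `P(X = x, Y_{[t]} = h_{[t]})` under the joint law `J` of `(X, Y)`. -/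
def prXH {n : ℕ} (J : (Fin n → X) → (Fin n → Option X) → ℝ) (t : ℕ)
    (x : Fin n → X) (h : Fin n → Option X) : ℝ :=
  ∑ y : Fin n → Option X, if agreeN t y h then J x y else 0

/-- `P(Y_i = b, X = x, Y_{[t]} = h_{[t]})` under the joint law `J`. -/
def prXHY {n : ℕ} (J : (Fin n → X) → (Fin n → Option X) → ℝ) (t : ℕ)
    (x : Fin n → X) (h : Fin n → Option X) (i : Fin n) (b : Option X) : ℝ :=
  ∑ y : Fin n → Option X, if y i = b ∧ agreeN t y h then J x y else 0

/-- `P(Y_{[t]} = h_{[t]})` under the joint law `J`. -/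
def prH {n : ℕ} (J : (Fin n → X) → (Fin n → Option X) → ℝ) (t : ℕ)
    (h : Fin n → Option X) : ℝ :=
  ∑ x : Fin n → X, prXH J t x h

/-- `P(X_K = u, Y_{[t]} = h_{[t]})` under the joint law `J`. -/
def prKH {n : ℕ} (J : (Fin n → X) → (Fin n → Option X) → ℝ) (K : Finset (Fin n))
    (t : ℕ) (u : ↥K → X) (h : Fin n → Option X) : ℝ :=
  ∑ x : Fin n → X, ∑ y : Fin n → Option X,
    if restr K x = u ∧ agreeN t y h then J x y else 0

/-- `P(X_i = a, X_K = u, Y_{[t]} = h_{[t]})` under the joint law `J`. -/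
def prIKH {n : ℕ} (J : (Fin n → X) → (Fin n → Option X) → ℝ) (K : Finset (Fin n))
    (t : ℕ) (i : Fin n) (a : X) (u : ↥K → X) (h : Fin n → Option X) : ℝ :=
  ∑ x : Fin n → X, ∑ y : Fin n → Option X,
    if x i = a ∧ restr K x = u ∧ agreeN t y h then J x y else 0

/-- `P(Y_i = b, X_K = u, Y_{[t]} = h_{[t]})` under the joint law `J`. -/
def prYKH {n : ℕ} (J : (Fin n → X) → (Fin n → Option X) → ℝ) (K : Finset (Fin n))
    (t : ℕ) (i : Fin n) (b : Option X) (u : ↥K → X) (h : Fin n → Option X) : ℝ :=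
  ∑ x : Fin n → X, ∑ y : Fin n → Option X,
    if y i = b ∧ restr K x = u ∧ agreeN t y h then J x y else 0

/-- `P(X_i = a | X_K = u, Y_{[t]} = h_{[t]})` under the joint law `J`. -/
def condX {n : ℕ} (J : (Fin n → X) → (Fin n → Option X) → ℝ) (K : Finset (Fin n))
    (t : ℕ) (i : Fin n) (a : X) (u : ↥K → X) (h : Fin n → Option X) : ℝ :=
  prIKH J K t i a u h / prKH J K t u h

/-- `min_u P(X_i = a | X_K = u, Y_{[t]} = h_{[t]})`, the minimum being over all `u` with
`P(X_K = u, Y_{[t]} = h_{[t]}) > 0`. -/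
def minC {n : ℕ} (J : (Fin n → X) → (Fin n → Option X) → ℝ) (K : Finset (Fin n))
    (t : ℕ) (i : Fin n) (a : X) (h : Fin n → Option X) : ℝ :=
  sInf {r : ℝ | ∃ u : ↥K → X, 0 < prKH J K t u h ∧ r = condX J K t i a u h}

/-- `J` is the joint law of `(X, Y)` where `Y` is generated from `X ∼ p` by the sequential
privacy mechanism: `Y_i ∈ {X_i, ∗}`, and conditionally on `X = x` and the previously
generated outputs `Y_{[i-1]} = y_{[i-1]}`, the mechanism releases `Y_i = x_i` with
probability `min_u P(X_i = x_i | X_K = u, Y_{[i-1]}) / P(X_i = x_i | X_K = x_K, Y_{[i-1]})`,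
and erases (`Y_i = ∗`) with the complementary probability. -/
def IsSequentialMechanism {n : ℕ} (p : (Fin n → X) → ℝ) (K : Finset (Fin n))
    (J : (Fin n → X) → (Fin n → Option X) → ℝ) : Prop :=
  (∀ x y, 0 ≤ J x y) ∧
  (∀ x, ∑ y : Fin n → Option X, J x y = p x) ∧
  (∀ x y, 0 < J x y → ∀ i : Fin n, y i = some (x i) ∨ y i = none) ∧
  (∀ (i : Fin n) (x : Fin n → X) (h : Fin n → Option X), 0 < prXH J (i : ℕ) x h →
    prXHY J (i : ℕ) x h i (some (x i))
      = (minC J K (i : ℕ) i (x i) h / condX J K (i : ℕ) i (x i) (restr K x) h)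
          * prXH J (i : ℕ) x h)


/-- `P(Y_i = b, Y_{[t]} = h_{[t]})` under the joint law `J`. -/
def prYH {n : ℕ} (J : (Fin n → X) → (Fin n → Option X) → ℝ) (t : ℕ)
    (i : Fin n) (b : Option X) (h : Fin n → Option X) : ℝ :=
  ∑ x : Fin n → X, ∑ y : Fin n → Option X,
    if y i = b ∧ agreeN t y h then J x y else 0

/-!
Faithfulness means that `Y_i = a` can only be released when `X_i = a`, so
`P(Y_i = a, X_K = u, h) ≤ P(X_i = a, X_K = u, h)`; local privacy turns the left side into
`P(Y_i = a | h) · P(X_K = u, h)`. Hence `P(Y_i = a | h) ≤ P(X_i = a | X_K = u, h)` for every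
admissible `u`, and summing the minimum over `a` bounds the erasure probability from below.
For the sequential mechanism the release probability
`min_u P(X_i = a | X_K = u, h) / P(X_i = a | X_K = x_K, h)` exactly cancels the conditional law
of `X_i` given `X_K = x_K`, so that
`P(Y_i = a, X_K = u, h) = min_u P(X_i = a | X_K = u, h) · P(X_K = u, h)`, and summing over `u`
gives equality.
-/

def IsFaithful {n : ℕ} (J : (Fin n → X) → (Fin n → Option X) → ℝ) : Prop :=
  ∀ x y, 0 < J x y → ∀ i : Fin n, y i = some (x i) ∨ y i = none

section Marginals

variable {n : ℕ} {J : (Fin n → X) → (Fin n → Option X) → ℝ} {K : Finset (Fin n)} {t : ℕ}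
  {i : Fin n} {h : Fin n → Option X}

omit [Fintype X] [DecidableEq X] in
theorem IsFaithful.apply_eq_zero (hJ0 : ∀ x y, 0 ≤ J x y) (hF : IsFaithful J)
    {x : Fin n → X} {y : Fin n → Option X} {a : X} (hy : y i = some a) (hx : x i ≠ a) :
    J x y = 0 := by
  refine le_antisymm (not_lt.mp fun hpos => ?_) (hJ0 x y)
  rcases hF x y hpos i with hxy | hxy <;> rw [hy] at hxy
  · exact hx (Option.some_injective _ hxy).symm
  · exact Option.some_ne_none _ hxy

theorem sum_prYH : ∑ b : Option X, prYH J t i b h = prH J t h := by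
  simp only [prYH, prH, prXH]
  rw [sum_comm]
  refine sum_congr rfl fun x _ => ?_
  rw [sum_comm]
  refine sum_congr rfl fun y _ => ?_
  by_cases ha : agreeN t y h <;> simp [ha]

theorem sum_prKH : ∑ u : ↥K → X, prKH J K t u h = prH J t h := by
  simp only [prKH, prH, prXH]
  rw [sum_comm]
  refine sum_congr rfl fun x _ => ?_
  rw [sum_comm]
  refine sum_congr rfl fun y _ => ?_
  by_cases ha : agreeN t y h <;> simp [ha]

theorem prYH_none_div_prH (hH : prH J t h ≠ 0) :
    prYH J t i none h / prH J t h = 1 - ∑ a : X, prYH J t i (some a) h / prH J t h := by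
  have hsum := sum_prYH (J := J) (t := t) (i := i) (h := h)
  rw [Fintype.sum_option] at hsum
  rw [← sum_div, eq_sub_iff_add_eq, ← add_div, hsum, div_self hH]

theorem sum_ite_mul_prXH (a : X) (f : (↥K → X) → ℝ) :
    ∑ x : Fin n → X, (if x i = a then f (restr K x) * prXH J t x h else 0)
      = ∑ u : ↥K → X, f u * prIKH J K t i a u h := by
  simp only [prIKH, mul_sum]
  rw [sum_comm]
  refine sum_congr rfl fun x _ => ?_
  by_cases hx : x i = a
  · rw [sum_comm]
    simp [hx, prXH, mul_sum, ite_and]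
  · simp [hx]

variable (hJ0 : ∀ x y, 0 ≤ J x y)
include hJ0

omit [DecidableEq X] in
theorem prXH_nonneg (x : Fin n → X) : 0 ≤ prXH J t x h :=
  sum_nonneg fun _ _ => ite_nonneg (hJ0 _ _) le_rfl

theorem prXHY_nonneg (x : Fin n → X) (b : Option X) : 0 ≤ prXHY J t x h i b :=
  sum_nonneg fun _ _ => ite_nonneg (hJ0 _ _) le_rfl

theorem prKH_nonneg (u : ↥K → X) : 0 ≤ prKH J K t u h :=
  sum_nonneg fun _ _ => sum_nonneg fun _ _ => ite_nonneg (hJ0 _ _) le_rfl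

theorem prIKH_nonneg (a : X) (u : ↥K → X) : 0 ≤ prIKH J K t i a u h :=
  sum_nonneg fun _ _ => sum_nonneg fun _ _ => ite_nonneg (hJ0 _ _) le_rfl

theorem prIKH_le_prKH (a : X) (u : ↥K → X) : prIKH J K t i a u h ≤ prKH J K t u h :=
  sum_le_sum fun x _ => sum_le_sum fun y _ => by
    split_ifs with hI hK <;> first | exact le_rfl | exact hJ0 x y | exact absurd hI.2 hK

theorem prXHY_le_prXH (x : Fin n → X) (b : Option X) : prXHY J t x h i b ≤ prXH J t x h :=
  sum_le_sum fun y _ => by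
    split_ifs with hY hA <;> first | exact le_rfl | exact hJ0 x y | exact absurd hY.2 hA

theorem exists_prKH_pos (hH : 0 < prH J t h) : ∃ u : ↥K → X, 0 < prKH J K t u h := by
  by_contra! hK
  have : ∑ u : ↥K → X, prKH J K t u h = 0 :=
    sum_eq_zero fun u _ => le_antisymm (hK u) (prKH_nonneg hJ0 u)
  rw [sum_prKH] at this
  exact hH.ne' this

theorem condX_nonneg (a : X) (u : ↥K → X) : 0 ≤ condX J K t i a u h :=
  div_nonneg (prIKH_nonneg hJ0 a u) (prKH_nonneg hJ0 u)

theorem minC_nonneg (a : X) : 0 ≤ minC J K t i a h :=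
  Real.sInf_nonneg <| by
    rintro r ⟨u, -, rfl⟩
    exact condX_nonneg hJ0 a u

theorem minC_le_condX {a : X} {u : ↥K → X} (hu : 0 < prKH J K t u h) :
    minC J K t i a h ≤ condX J K t i a u h := by
  refine csInf_le ⟨0, ?_⟩ ⟨u, hu, rfl⟩
  rintro r ⟨v, -, rfl⟩
  exact condX_nonneg hJ0 a v

end Marginals

section Bound

variable {n : ℕ} {J : (Fin n → X) → (Fin n → Option X) → ℝ} {K : Finset (Fin n)} {t : ℕ}
  {i : Fin n} {h : Fin n → Option X} (hJ0 : ∀ x y, 0 ≤ J x y) (hF : IsFaithful J)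
include hJ0 hF

theorem prYKH_some_le_prIKH (a : X) (u : ↥K → X) :
    prYKH J K t i (some a) u h ≤ prIKH J K t i a u h :=
  sum_le_sum fun x _ => sum_le_sum fun y _ => by
    split_ifs with hY hI hI
    · exact le_rfl
    · exact (hF.apply_eq_zero hJ0 hY.1 fun hx => hI ⟨hx, hY.2⟩).le
    · exact hJ0 x y
    · exact le_rfl

theorem prYH_some_div_prH_le_minC (hH : 0 < prH J t h) (a : X)
    (hpriv : ∀ u : ↥K → X,
      prYKH J K t i (some a) u h * prH J t h = prYH J t i (some a) h * prKH J K t u h) :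
    prYH J t i (some a) h / prH J t h ≤ minC J K t i a h := by
  obtain ⟨u₀, hu₀⟩ := exists_prKH_pos hJ0 hH
  refine le_csInf ⟨_, u₀, hu₀, rfl⟩ ?_
  rintro r ⟨u, hu, rfl⟩
  rw [condX, div_le_div_iff₀ hH hu, ← hpriv]
  exact mul_le_mul_of_nonneg_right (prYKH_some_le_prIKH hJ0 hF a u) hH.le

end Bound

section Sequential

variable {n : ℕ} {J : (Fin n → X) → (Fin n → Option X) → ℝ} {K : Finset (Fin n)} {t : ℕ}
  {i : Fin n} {h : Fin n → Option X} (hJ0 : ∀ x y, 0 ≤ J x y)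
include hJ0

theorem prXHY_some_eq_zero (hF : IsFaithful J) {x : Fin n → X} {a : X} (hx : x i ≠ a) :
    prXHY J t x h i (some a) = 0 :=
  sum_eq_zero fun y _ => by
    split_ifs with hY
    · exact hF.apply_eq_zero hJ0 hY.1 hx
    · rfl

theorem minC_div_condX_mul_prIKH (a : X) (u : ↥K → X) :
    minC J K t i a h / condX J K t i a u h * prIKH J K t i a u h
      = minC J K t i a h * prKH J K t u h := by
  rcases (prIKH_nonneg hJ0 a u).eq_or_lt with hI | hI
  · rcases (prKH_nonneg hJ0 u).eq_or_lt with hK | hK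
    · rw [← hI, ← hK, mul_zero, mul_zero]
    have hmin : minC J K t i a h = 0 :=
      le_antisymm (by simpa [condX, ← hI] using minC_le_condX (i := i) (a := a) hJ0 hK)
        (minC_nonneg hJ0 a)
    rw [hmin, zero_div, zero_mul, zero_mul]
  · have hK := hI.trans_le (prIKH_le_prKH hJ0 a u)
    rw [condX]
    field_simp

theorem prYH_some_eq_minC_mul_prH (hF : IsFaithful J) (a : X)
    (hseq : ∀ x : Fin n → X, 0 < prXH J t x h →
      prXHY J t x h i (some (x i))
        = (minC J K t i (x i) h / condX J K t i (x i) (restr K x) h) * prXH J t x h) :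
    prYH J t i (some a) h = minC J K t i a h * prH J t h := by
  have hrelease : ∀ x : Fin n → X, prXHY J t x h i (some a)
      = if x i = a then minC J K t i a h / condX J K t i a (restr K x) h * prXH J t x h
        else 0 := by
    intro x
    split_ifs with hx
    · subst hx
      rcases (prXH_nonneg hJ0 x).eq_or_lt with h0 | hpos
      · rw [← h0, mul_zero]
        exact le_antisymm (h0 ▸ prXHY_le_prXH hJ0 x _) (prXHY_nonneg hJ0 x _)
      · exact hseq x hpos
    · exact prXHY_some_eq_zero hJ0 hF hx
  calc prYH J t i (some a) h = ∑ x : Fin n → X, prXHY J t x h i (some a) := rfl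
    _ = ∑ u : ↥K → X, minC J K t i a h / condX J K t i a u h * prIKH J K t i a u h := by
      simp only [hrelease]
      exact sum_ite_mul_prXH a fun u => minC J K t i a h / condX J K t i a u h
    _ = minC J K t i a h * prH J t h := by
      simp only [minC_div_condX_mul_prIKH hJ0, ← mul_sum, sum_prKH]

end Sequential

theorem sequentialMechanism_locally_optimal_general {n : ℕ}
    (p : (Fin n → X) → ℝ)
    (K : Finset (Fin n))
    -- `J'` : an arbitrary faithful, locally private mechanism
    (J' : (Fin n → X) → (Fin n → Option X) → ℝ)
    (hJ'0 : ∀ x y, 0 ≤ J' x y)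
    (hJ'faithful : ∀ x y, 0 < J' x y → ∀ i : Fin n, y i = some (x i) ∨ y i = none)
    (hJ'localPriv : ∀ (i : Fin n) (b : Option X) (u : ↥K → X) (h : Fin n → Option X),
      prYKH J' K (i : ℕ) i b u h * prH J' (i : ℕ) h
        = prYH J' (i : ℕ) i b h * prKH J' K (i : ℕ) u h)
    -- `J` : the sequential privacy mechanism
    (J : (Fin n → X) → (Fin n → Option X) → ℝ)
    (hJ : IsSequentialMechanism p K J) :
    (∀ (i : Fin n) (h : Fin n → Option X), 0 < prH J' (i : ℕ) h →
      prYH J' (i : ℕ) i none h / prH J' (i : ℕ) h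
        ≥ 1 - ∑ a : X, minC J' K (i : ℕ) i a h) ∧
    (∀ (i : Fin n) (h : Fin n → Option X), 0 < prH J (i : ℕ) h →
      prYH J (i : ℕ) i none h / prH J (i : ℕ) h
        = 1 - ∑ a : X, minC J K (i : ℕ) i a h) := by
  obtain ⟨hJ0, -, hJfaithful, hJseq⟩ := hJ
  refine ⟨fun i h hH => ?_, fun i h hH => ?_⟩
  · rw [prYH_none_div_prH hH.ne', ge_iff_le, sub_le_sub_iff_left]
    exact sum_le_sum fun a _ => prYH_some_div_prH_le_minC hJ'0 hJ'faithful hH a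
      fun u => hJ'localPriv i (some a) u h
  · rw [prYH_none_div_prH hH.ne']
    congr 1
    refine sum_congr rfl fun a _ => ?_
    rw [prYH_some_eq_minC_mul_prH hJ0 hJfaithful a (hJseq i · h ·), mul_div_cancel_right₀ _ hH.ne']

/-- local optimality of the sequential mechanism: if `J'` is the joint law
of `(X, Y)` for any mechanism which is faithful (`Y_i ∈ {X_i, ∗}` a.s.) and locally
private (`Y_i` conditionally independent of `X_K` given `Y_{[i-1]}`), then for every
positive-probability history `h`,
`P(Y_i = ∗ | Y_{[i-1]} = h) ≥ 1 - ∑_a min_u P(X_i = a | X_K = u, Y_{[i-1]} = h)`.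
Moreover the sequential privacy mechanism `J` attains this bound with equality, hence
minimizes the conditional erasure probability at each step. -/
theorem sequentialMechanism_locally_optimal {n : ℕ} (hn : 1 ≤ n)
    (hX : 2 ≤ Fintype.card X)
    (p : (Fin n → X) → ℝ) (hp0 : ∀ x, 0 ≤ p x) (hp1 : ∑ x : Fin n → X, p x = 1)
    (K : Finset (Fin n))
    -- `J'` : an arbitrary faithful, locally private mechanism
    (J' : (Fin n → X) → (Fin n → Option X) → ℝ)
    (hJ'0 : ∀ x y, 0 ≤ J' x y)
    (hJ'marg : ∀ x, ∑ y : Fin n → Option X, J' x y = p x)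
    (hJ'faithful : ∀ x y, 0 < J' x y → ∀ i : Fin n, y i = some (x i) ∨ y i = none)
    (hJ'localPriv : ∀ (i : Fin n) (b : Option X) (u : ↥K → X) (h : Fin n → Option X),
      prYKH J' K (i : ℕ) i b u h * prH J' (i : ℕ) h
        = prYH J' (i : ℕ) i b h * prKH J' K (i : ℕ) u h)
    -- `J` : the sequential privacy mechanism
    (J : (Fin n → X) → (Fin n → Option X) → ℝ)
    (hJ : IsSequentialMechanism p K J) :
    (∀ (i : Fin n) (h : Fin n → Option X), 0 < prH J' (i : ℕ) h →
      prYH J' (i : ℕ) i none h / prH J' (i : ℕ) h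
        ≥ 1 - ∑ a : X, minC J' K (i : ℕ) i a h) ∧
    (∀ (i : Fin n) (h : Fin n → Option X), 0 < prH J (i : ℕ) h →
      prYH J (i : ℕ) i none h / prH J (i : ℕ) h
        = 1 - ∑ a : X, minC J K (i : ℕ) i a h) :=
  sequentialMechanism_locally_optimal_general p K J' hJ'0 hJ'faithful hJ'localPriv J hJ

end GenotypeHiding
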